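/- Let Q be a graph with minimum degree at least 3, and let H be a dissolution of G (obtained from G by a sequence of dissolutions of degree-2 vertices). If Q is a contraction of G, then Q is a contraction of H. -/

import Mathlib

open SimpleGraph

universe u

/-- A set `S` is a connected set of `G` if the induced subgraph is connected. -/
def ConnSet {V : Type u} (G : SimpleGraph V) (S : Set V) : Prop :=
  (G.induce S).Connected

/-- `σ` witnesses that `H` is a contraction of `G`: `σ` is surjective, every fiber
induces a connected nonempty subgraph, and `H.Adj x y` iff the union of the fibers
of `x` and `y` induces a connected subgraph. -/
def IsContractionMap {V : Type u} {W : Type*} (G : SimpleGraph V) (H : SimpleGraph W)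
    (σ : V → W) : Prop :=
  Function.Surjective σ ∧
  (∀ x : W, ConnSet G (σ ⁻¹' {x})) ∧
  (∀ x y : W, x ≠ y → (H.Adj x y ↔ ConnSet G (σ ⁻¹' {x} ∪ σ ⁻¹' {y})))

/-- `H` is a contraction of `G`. -/
def IsContraction {W : Type*} {V : Type u} (H : SimpleGraph W) (G : SimpleGraph V) : Prop :=
  ∃ σ : V → W, IsContractionMap G H σ

/-- The set `S` has diameter at most `c` in `G` (distances measured in `G[S]`). -/
def DiamLE {V : Type u} (G : SimpleGraph V) (S : Set V) (c : ℕ) : Prop :=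
  ∀ u v : S, (G.induce S).dist u v ≤ c

/-- `H` is a `c`-size contraction of `G`: all fibers have at most `c` vertices. -/
def IsSizeContraction {W : Type*} {V : Type u} (H : SimpleGraph W) (G : SimpleGraph V)
    (c : ℕ) : Prop :=
  ∃ σ : V → W, IsContractionMap G H σ ∧ ∀ x : W, (σ ⁻¹' {x}).ncard ≤ c

/-- `H` is a `c`-diameter contraction of `G`: all fibers have diameter at most `c`. -/
def IsDiamContraction {W : Type*} {V : Type u} (H : SimpleGraph W) (G : SimpleGraph V)
    (c : ℕ) : Prop :=
  ∃ σ : V → W, IsContractionMap G H σ ∧ ∀ x : W, DiamLE G (σ ⁻¹' {x}) c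

/-- `H` is a minor of `G`: `H` is a contraction of a subgraph of `G`. -/
def IsMinor {W : Type*} {V : Type u} (H : SimpleGraph W) (G : SimpleGraph V) : Prop :=
  ∃ (S : Set V) (G' : SimpleGraph S),
    (∀ a b : S, G'.Adj a b → G.Adj a.val b.val) ∧ IsContraction H G'

/-- A tree-decomposition of `G`. -/
structure TreeDecomp {V : Type u} (G : SimpleGraph V) where
  ι : Type u
  T : SimpleGraph ι
  isTree : T.IsTree
  bag : ι → Set V
  mem_bag : ∀ v : V, ∃ t, v ∈ bag t
  edge_bag : ∀ ⦃u v : V⦄, G.Adj u v → ∃ t, u ∈ bag t ∧ v ∈ bag t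
  conn_bag : ∀ v : V, ConnSet T {t | v ∈ bag t}

/-- `G` has treewidth at most `k`. -/
def TwLE {V : Type u} (G : SimpleGraph V) (k : ℕ) : Prop :=
  ∃ D : TreeDecomp G, ∀ t, (D.bag t).ncard ≤ k + 1

/-- The treewidth of `G`. -/
noncomputable def tw {V : Type u} (G : SimpleGraph V) : ℕ :=
  sInf {k | TwLE G k}

/-- Boundary vertices of the `(k × k)`-grid. -/
def Boundary (k : ℕ) (q : Fin k × Fin k) : Prop :=
  q.1.val = 0 ∨ q.1.val = k - 1 ∨ q.2.val = 0 ∨ q.2.val = k - 1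

/-- The base relation of the uniformly triangulated grid `Γ_k`: grid edges,
diagonal edges, and edges from the corner `(k-1,k-1)` to all boundary vertices. -/
def triGridRel (k : ℕ) (p q : Fin k × Fin k) : Prop :=
  (p.1 = q.1 ∧ p.2.val + 1 = q.2.val) ∨
  (p.2 = q.2 ∧ p.1.val + 1 = q.1.val) ∨
  (p.1.val = q.1.val + 1 ∧ q.2.val = p.2.val + 1) ∨
  (p.1.val = k - 1 ∧ p.2.val = k - 1 ∧ Boundary k q)

/-- The uniformly triangulated grid `Γ_k`. -/
def triGrid (k : ℕ) : SimpleGraph (Fin k × Fin k) :=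
  SimpleGraph.fromRel (triGridRel k)

/-- `bcg G` is the maximum `k` such that `Γ_k` is a contraction of `G`. -/
noncomputable def bcg {V : Type u} (G : SimpleGraph V) : ℕ :=
  sSup {k | IsContraction (triGrid k) G}

/-- The graph obtained from `G` by dissolving the degree-2 vertex `v` with
neighbors `x` and `y`. -/
def dissolve {V : Type u} (G : SimpleGraph V) (v x y : V) :
    SimpleGraph {u : V // u ≠ v} :=
  SimpleGraph.fromRel (fun a b => G.Adj a.val b.val ∨ (a.val = x ∧ b.val = y))

/-- Bundled finite simple graphs. -/
structure BGraph : Type 1 where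
  V : Type
  [fintypeV : Fintype V]
  G : SimpleGraph V

attribute [instance] BGraph.fintypeV

/-- `B` is obtained from `A` by dissolving one degree-2 vertex. -/
def DissolveStep (A B : BGraph) : Prop :=
  ∃ (v x y : A.V), x ≠ y ∧ A.G.neighborSet v = {x, y} ∧
    Nonempty (B.G ≃g dissolve A.G v x y)

/-- `B` is a dissolution of `A` (a finite sequence of dissolutions of degree-2 vertices). -/
def IsDissolution (A B : BGraph) : Prop :=
  Relation.ReflTransGen DissolveStep A B


/-!
Dissolving a degree-2 vertex `v` with neighbours `x, y` preserves a contraction `σ` onto a graph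
`Q` of minimum degree at least 3. If neither `x` nor `y` lay in the fibre of `v`, then, since
unions of two adjacent fibres are connected, every neighbour of `σ v` in `Q` would be `σ x` or
`σ y`, so `σ v` would have degree at most 2. Hence, say, `σ x = σ v`, and then restricting `σ` to
the vertices other than `v` is a contraction of the dissolved graph: a path through `v` inside a
union of fibres can be rerouted along the new edge `xy`, and conversely the edge `xy` can be
replaced by `x v y`, because `v` lies in every union of fibres containing `x`.
-/

namespace SimpleGraph

variable {V W : Type*} {G : SimpleGraph V} {H : SimpleGraph W}

lemma Preconnected.of_reachable_map (hG : G.Preconnected) (f : V → W)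
    (hf : ∀ a b, G.Adj a b → H.Reachable (f a) (f b))
    (hcover : ∀ w, ∃ a, H.Reachable (f a) w) : H.Preconnected := by
  intro w₁ w₂
  obtain ⟨a₁, h₁⟩ := hcover w₁
  obtain ⟨a₂, h₂⟩ := hcover w₂
  have hmap : H.Reachable (f a₁) (f a₂) := by
    simp only [reachable_iff_reflTransGen] at hf ⊢
    exact Relation.ReflTransGen.lift' f hf a₁ a₂ ((reachable_iff_reflTransGen _ _).1 (hG a₁ a₂))
  exact h₁.symm.trans (hmap.trans h₂)

end SimpleGraph

section ConnSet

variable {V V' : Type*} {G : SimpleGraph V}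

lemma ConnSet.preimage_iso {G' : SimpleGraph V'} (e : G ≃g G') {T : Set V'} :
    ConnSet G (e ⁻¹' T) ↔ ConnSet G' T :=
  (e.induce e.bijective.bijOn_preimage).connected_iff

lemma ConnSet.exists_adj {S : Set V} (hS : ConnSet G S) {v w : V} (hv : v ∈ S) (hw : w ∈ S)
    (hvw : v ≠ w) : ∃ u ∈ S, G.Adj v u := by
  obtain ⟨p⟩ := hS.preconnected ⟨v, hv⟩ ⟨w, hw⟩
  cases p with
  | nil => exact absurd rfl hvw
  | @cons _ u _ h _ => exact ⟨u, u.prop, h⟩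

end ConnSet

lemma IsContraction.of_iso {V V' W : Type*} {G : SimpleGraph V} {G' : SimpleGraph V'}
    {Q : SimpleGraph W} (e : G ≃g G') (h : IsContraction Q G') : IsContraction Q G := by
  obtain ⟨σ, hsurj, hfib, hadj⟩ := h
  refine ⟨σ ∘ e, hsurj.comp e.surjective, fun w => ?_, fun p q hpq => ?_⟩
  · exact (ConnSet.preimage_iso e).2 (hfib w)
  · exact (hadj p q hpq).trans (ConnSet.preimage_iso e).symm

section Dissolve

variable {V : Type u} {G : SimpleGraph V} {v x y : V}

lemma dissolve_comm : dissolve G v x y = dissolve G v y x := by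
  ext a b
  simp only [dissolve, fromRel_adj]
  tauto

lemma dissolve_adj_of_adj {a b : {u : V // u ≠ v}} (h : G.Adj a b) :
    (dissolve G v x y).Adj a b :=
  ⟨fun hab => h.ne (congrArg Subtype.val hab), Or.inl (Or.inl h)⟩

lemma dissolve_adj_of_eq (hxy : x ≠ y) {a b : {u : V // u ≠ v}} (ha : a.val = x)
    (hb : b.val = y) : (dissolve G v x y).Adj a b :=
  ⟨fun hab => hxy (ha ▸ hb ▸ congrArg Subtype.val hab), Or.inl (Or.inr ⟨ha, hb⟩)⟩

/-- Walks of `G[S]` are pushed to `dissolve G v x y` by sending `v` to `x`. -/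
lemma ConnSet.to_dissolve (hN : G.neighborSet v = {x, y}) (hxy : x ≠ y) {S : Set V}
    (hS : ConnSet G S) (hxS : v ∈ S → x ∈ S) :
    ConnSet (dissolve G v x y) (Subtype.val ⁻¹' S) := by
  classical
  have hnbr : ∀ {u}, G.Adj v u → u = x ∨ u = y := fun {u} h => by
    rwa [← mem_neighborSet, hN, Set.mem_insert_iff, Set.mem_singleton_iff] at h
  have hxv : x ≠ v := by
    have hvx : G.Adj v x := by rw [← mem_neighborSet, hN]; exact Or.inl rfl
    exact hvx.ne'
  let f : S → (Subtype.val ⁻¹' S : Set {u : V // u ≠ v}) := fun a =>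
    if h : a.val = v then ⟨⟨x, hxv⟩, hxS (h ▸ a.prop)⟩ else ⟨⟨a, h⟩, a.prop⟩
  have hf_of_ne : ∀ a : S, (ha : a.val ≠ v) → f a = ⟨⟨a, ha⟩, a.prop⟩ := fun a ha => dif_neg ha
  have hf_at_v : ∀ a b : S, a.val = v → G.Adj v b →
      ((dissolve G v x y).induce _).Reachable (f a) (f b) := by
    intro a b ha hvb
    rw [hf_of_ne b hvb.ne', show f a = ⟨⟨x, hxv⟩, hxS (ha ▸ a.prop)⟩ from dif_pos ha]
    rcases hnbr hvb with hbx | hby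
    · obtain ⟨b, hbS⟩ := b
      obtain rfl : b = x := hbx
      exact .rfl
    · exact Adj.reachable (show ((dissolve G v x y).induce _).Adj _ _ from
        dissolve_adj_of_eq hxy rfl hby)
  have hf : ∀ a b : S, G.Adj a b → ((dissolve G v x y).induce _).Reachable (f a) (f b) := by
    intro a b hab
    by_cases ha : a.val = v
    · exact hf_at_v a b ha (ha ▸ hab)
    by_cases hb : b.val = v
    · exact (hf_at_v b a hb (hb ▸ hab.symm)).symm
    rw [hf_of_ne a ha, hf_of_ne b hb]
    exact Adj.reachable (show ((dissolve G v x y).induce _).Adj _ _ from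
      dissolve_adj_of_adj (a := ⟨a.val, ha⟩) (b := ⟨b.val, hb⟩) hab)
  refine connected_iff _ |>.2 ⟨hS.preconnected.of_reachable_map f hf fun w => ?_, ?_⟩
  · exact ⟨⟨w.val.val, w.prop⟩, by rw [hf_of_ne _ w.val.prop]⟩
  · obtain ⟨a⟩ := hS.nonempty
    exact ⟨f a⟩

/-- Edges of `dissolve G v x y` are pulled back to `G[S]` by replacing `xy` with `x v y`. -/
lemma ConnSet.of_dissolve (hvx : G.Adj v x) (hvy : G.Adj v y) {S : Set V}
    (hS : ConnSet (dissolve G v x y) (Subtype.val ⁻¹' S)) (hxS : x ∈ S ↔ v ∈ S) :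
    ConnSet G S := by
  let f : (Subtype.val ⁻¹' S : Set {u : V // u ≠ v}) → S := fun a => ⟨a.val.val, a.prop⟩
  have hpath : ∀ {a b : S}, a.val = x → b.val = y → (G.induce S).Reachable a b := by
    intro a b ha hb
    have hv : v ∈ S := hxS.1 (ha ▸ a.prop)
    have hav : (G.induce S).Adj a ⟨v, hv⟩ := by
      simpa only [comap_adj, Function.Embedding.subtype_apply, ha] using hvx.symm
    have hvb : (G.induce S).Adj ⟨v, hv⟩ b := by
      simpa only [comap_adj, Function.Embedding.subtype_apply, hb] using hvy
    exact hav.reachable.trans hvb.reachable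
  have hf : ∀ a b, ((dissolve G v x y).induce _).Adj a b → (G.induce S).Reachable (f a) (f b) := by
    rintro a b ⟨-, (hab | ⟨ha, hb⟩) | (hba | ⟨hb, ha⟩)⟩
    · exact Adj.reachable hab
    · exact hpath ha hb
    · exact (Adj.reachable (G := G.induce S) (u := f b) (v := f a) hba).symm
    · exact (hpath hb ha).symm
  have hcover : ∀ w : S, ∃ a, (G.induce S).Reachable (f a) w := by
    intro w
    by_cases hw : w.val = v
    · refine ⟨⟨⟨x, hvx.ne'⟩, hxS.2 (hw ▸ w.prop)⟩, Adj.reachable ?_⟩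
      simpa only [comap_adj, Function.Embedding.subtype_apply, hw] using hvx.symm
    · exact ⟨⟨⟨w, hw⟩, w.prop⟩, .rfl⟩
  refine connected_iff _ |>.2 ⟨hS.preconnected.of_reachable_map f hf hcover, ?_⟩
  obtain ⟨a⟩ := hS.nonempty
  exact ⟨f a⟩

end Dissolve

namespace IsContractionMap

variable {V W : Type*} {G : SimpleGraph V} {Q : SimpleGraph W} {σ : V → W} {v x y : V}

lemma neighborSet_subset_image (hσ : IsContractionMap G Q σ)
    (hv : ∀ u ∈ G.neighborSet v, σ u ≠ σ v) : Q.neighborSet (σ v) ⊆ σ '' G.neighborSet v := by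
  intro q hq
  obtain ⟨w, rfl⟩ := hσ.1 q
  have hconn := (hσ.2.2 _ _ hq.ne).1 hq
  obtain ⟨u, hu, hvu⟩ := hconn.exists_adj (Or.inl rfl) (Or.inr rfl)
    (fun hvw => hq.ne (congrArg σ hvw))
  refine ⟨u, hvu, ?_⟩
  rcases hu with hu | hu
  · exact absurd hu (hv u hvu)
  · exact hu

lemma fiber_meets_neighbor (hσ : IsContractionMap G Q σ)
    (hQ : ∀ w : W, 3 ≤ (Q.neighborSet w).ncard) (hN : G.neighborSet v = {x, y}) :
    σ x = σ v ∨ σ y = σ v := by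
  by_contra! hne
  have hsub := hσ.neighborSet_subset_image (v := v) (by
    rw [hN]
    rintro u (rfl | rfl)
    exacts [hne.1, hne.2])
  rw [hN] at hsub
  have hpair : ({x, y} : Set V).Finite := (Set.finite_singleton y).insert x
  have hdeg : (Q.neighborSet (σ v)).ncard ≤ 2 :=
    calc (Q.neighborSet (σ v)).ncard ≤ (σ '' {x, y}).ncard :=
          Set.ncard_le_ncard hsub (hpair.image σ)
      _ ≤ ({x, y} : Set V).ncard := Set.ncard_image_le hpair
      _ ≤ 2 := (Set.ncard_insert_le x {y}).trans (by simp)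
  have := hQ (σ v)
  omega

lemma to_dissolve (hσ : IsContractionMap G Q σ) (hN : G.neighborSet v = {x, y}) (hxy : x ≠ y)
    (hxv : σ x = σ v) : IsContractionMap (dissolve G v x y) Q (σ ∘ Subtype.val) := by
  have hvx : G.Adj v x := by rw [← mem_neighborSet, hN]; exact Or.inl rfl
  have hvy : G.Adj v y := by rw [← mem_neighborSet, hN]; exact Or.inr rfl
  have hxT : ∀ T : Set W, x ∈ σ ⁻¹' T ↔ v ∈ σ ⁻¹' T := fun T => by
    simp only [Set.mem_preimage, hxv]
  have hfib : ∀ w, ConnSet (dissolve G v x y) ((σ ∘ Subtype.val) ⁻¹' {w}) :=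
    fun w => (hσ.2.1 w).to_dissolve hN hxy (hxT _).2
  refine ⟨fun w => ?_, hfib, fun p q hpq => ?_⟩
  · obtain ⟨⟨a, ha⟩⟩ := (hfib w).nonempty
    exact ⟨a, ha⟩
  · rw [hσ.2.2 p q hpq, ← Set.preimage_union, ← Set.preimage_union, Set.preimage_comp]
    exact ⟨fun h => h.to_dissolve hN hxy (hxT _).2, fun h => h.of_dissolve hvx hvy (hxT _)⟩

end IsContractionMap

lemma IsContraction.of_dissolveStep {W : Type*} {Q : SimpleGraph W}
    (hQ : ∀ w : W, 3 ≤ (Q.neighborSet w).ncard) {A B : BGraph} (hs : DissolveStep A B)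
    (h : IsContraction Q A.G) : IsContraction Q B.G := by
  obtain ⟨v, x, y, hxy, hN, ⟨e⟩⟩ := hs
  obtain ⟨σ, hσ⟩ := h
  refine IsContraction.of_iso e ?_
  rcases hσ.fiber_meets_neighbor hQ hN with hxv | hyv
  · exact ⟨_, hσ.to_dissolve hN hxy hxv⟩
  · rw [dissolve_comm]
    exact ⟨_, hσ.to_dissolve (by rw [hN, Set.pair_comm]) hxy.symm hyv⟩

/-- If every vertex of `Q` has degree at least 3 and `B` is a dissolution
of `A`, then `Q` a contraction of `A` implies `Q` a contraction of `B`. -/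
theorem stmt_4 {VQ : Type} (Q : SimpleGraph VQ)
    (hQ : ∀ w : VQ, 3 ≤ (Q.neighborSet w).ncard)
    (A B : BGraph) (hd : IsDissolution A B)
    (h : IsContraction Q A.G) :
    IsContraction Q B.G := by
  induction hd with
  | refl => exact h
  | tail _ hstep ih => exact ih.of_dissolveStep hQ hstep
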